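/- arXiv:1701.05102 — 2 statements merged into one kernel-verified Lean document; each statement's English description precedes it below -/
import Mathlib

section
/- Let a, b, c, d be positive integers. The pair (X, Oz) associated to the complex surface V = {(x,y,z) ∈ ℂ³ : y^a = z^b·x^c + x^d} is Whitney (b)-regular at the origin if and only if a = 1 or d ≤ c. -/
open Filter

noncomputable section

/-- x-partial derivative of f(x,y,z) = y^a - z^b*x^c - x^d. -/
def fxC (b c d : ℕ) (x z : ℂ) : ℂ :=
  -(c : ℂ) * z ^ b * x ^ (c - 1) - (d : ℂ) * x ^ (d - 1)

/-- y-partial derivative of f. -/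
def fyC (a : ℕ) (y : ℂ) : ℂ := (a : ℂ) * y ^ (a - 1)

/-- z-partial derivative of f. -/
def fzC (b c : ℕ) (x z : ℂ) : ℂ := -(b : ℂ) * z ^ (b - 1) * x ^ c

/-- Hermitian norm on ℂ³. -/
def nrm3C (u v w : ℂ) : ℝ := Real.sqrt (‖u‖ ^ 2 + ‖v‖ ^ 2 + ‖w‖ ^ 2)

/-- Hermitian norm on ℂ². -/
def nrm2C (u v : ℂ) : ℝ := Real.sqrt (‖u‖ ^ 2 + ‖v‖ ^ 2)

/-- Norm of the gradient ∇f(x,y,z). -/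
def gradNormC (a b c d : ℕ) (x y z : ℂ) : ℝ :=
  nrm3C (fxC b c d x z) (fyC a y) (fzC b c x z)

/-- The gradient ∇f(x,y,z) is nonzero. -/
def gradNeC (a b c d : ℕ) (x y z : ℂ) : Prop :=
  ¬ (fxC b c d x z = 0 ∧ fyC a y = 0 ∧ fzC b c x z = 0)

/-- Membership in X = V \ Oz, where V = {y^a = z^b x^c + x^d} and Oz is the z-axis. -/
def inXC (a b c d : ℕ) (x y z : ℂ) : Prop :=
  y ^ a = z ^ b * x ^ c + x ^ d ∧ ¬ (x = 0 ∧ y = 0)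

/-- Whitney (a)-regularity of the pair (X, Oz) at the origin. -/
def aRegC (a b c d : ℕ) : Prop :=
  ∀ x y z : ℕ → ℂ,
    (∀ n, inXC a b c d (x n) (y n) (z n)) →
    Tendsto (fun n => (x n, y n, z n)) atTop (nhds ((0 : ℂ), (0 : ℂ), (0 : ℂ))) →
    (∀ n, gradNeC a b c d (x n) (y n) (z n)) →
    Tendsto (fun n => ‖fzC b c (x n) (z n)‖ / gradNormC a b c d (x n) (y n) (z n))
      atTop (nhds 0)

/-- The (bᵖⁱ) condition for the retraction π(x,y,z) = (0,0,z). -/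
def bpiC (a b c d : ℕ) : Prop :=
  ∀ x y z : ℕ → ℂ,
    (∀ n, inXC a b c d (x n) (y n) (z n)) →
    Tendsto (fun n => (x n, y n, z n)) atTop (nhds ((0 : ℂ), (0 : ℂ), (0 : ℂ))) →
    (∀ n, gradNeC a b c d (x n) (y n) (z n)) →
    Tendsto (fun n => ‖x n * fxC b c d (x n) (z n) + y n * fyC a (y n)‖ /
        (nrm2C (x n) (y n) * gradNormC a b c d (x n) (y n) (z n)))
      atTop (nhds 0)

/-- Whitney (b)-regularity of the pair (X, Oz) at the origin. -/
def bRegC (a b c d : ℕ) : Prop := aRegC a b c d ∧ bpiC a b c d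

/-- Kuo–Verdier (w)-regularity of the pair (X, Oz) at the origin. -/
def wRegC (a b c d : ℕ) : Prop :=
  ∃ C : ℝ, 0 < C ∧ ∃ ε : ℝ, 0 < ε ∧ ∀ x y z : ℂ,
    inXC a b c d x y z → nrm3C x y z < ε → gradNeC a b c d x y z →
    ‖fzC b c x z‖ ≤ C * nrm2C x y * gradNormC a b c d x y z

/-!
If a = 1 then |∂f/∂y| = 1, and both ratios are bounded by functions vanishing at the origin.

If d ≤ c, put u = z^b x^(c-d), which tends to 0. On V we have y^a = x^d (1 + u) and
∂f/∂x = -x^(d-1) (c u + d), so |∂f/∂x| ≥ (d/2)|x|^(d-1) and |x|^d ≤ 2|y|^a near the origin;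
this already gives (a). On V the (bπ) numerator is x^d ((a-c) u + (a-d)). Its first part is
O(|u|) against |y| |∂f/∂y| = a|y|^a. When a ≠ d the second part is negligible against
|x| |∂f/∂y| (if a < d) or |y| |∂f/∂x| (if a > d), which is seen after raising to the a-th power.

If a ≥ 2 and c < d, pick ζ with ζ^b = -1. The curve x = u^b, y = 0, z = ζ u^(d-c) lies in X,
∂f/∂y vanishes along it and ∂f/∂x does not, so the squares of the (a) ratio and of the (bπ)
ratio add up to 1 there and cannot both tend to 0.
-/

open Topology

lemma Filter.Tendsto.zero_of_pow_le {ι : Type*} {l : Filter ι} {r t : ι → ℝ} {k m : ℕ} {K : ℝ}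
    (ht : Tendsto t l (𝓝 0)) (hk : k ≠ 0) (hm : m ≠ 0) (hr : ∀ i, 0 ≤ r i)
    (h : ∀ᶠ i in l, r i ^ k ≤ K * t i ^ m) : Tendsto r l (𝓝 0) := by
  have hpow : Tendsto (fun i => r i ^ k) l (𝓝 0) :=
    squeeze_zero' (.of_forall fun i => pow_nonneg (hr i) k) h
      (by simpa [hm] using (ht.pow m).const_mul K)
  simpa [Real.pow_rpow_inv_natCast (hr _) hk, hk] using
    hpow.rpow_const (p := (k : ℝ)⁻¹) (.inr (by positivity))

lemma div_pow_le_of_pow_le {T P D m K : ℝ} {k : ℕ} (hk : k ≠ 0) (hm : 0 < m) (hK : 0 ≤ K)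
    (hP : 0 ≤ P) (hD : m * P ≤ D) (hT : T ^ k ≤ K * P ^ k) : (T / D) ^ k ≤ K / m ^ k := by
  rcases (show 0 ≤ D by nlinarith).eq_or_lt with rfl | hD0
  · simp only [div_zero, zero_pow hk]
    positivity
  rw [div_pow, div_le_div_iff₀ (by positivity) (by positivity)]
  calc T ^ k * m ^ k ≤ K * P ^ k * m ^ k := by gcongr
    _ = K * (m * P) ^ k := by ring
    _ ≤ K * D ^ k := by gcongr

lemma pow_pow_le_of_lt {a d : ℕ} {t s : ℝ} (ht : 0 ≤ t) (ha : 0 < a) (had : a < d)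
    (h : t ^ d ≤ 2 * s ^ a) : (t ^ d) ^ a ≤ 2 ^ (a - 1) * t ^ (d - a) * (t * s ^ (a - 1)) ^ a := by
  obtain ⟨k, rfl⟩ := Nat.exists_eq_add_of_lt ha
  obtain ⟨m, rfl⟩ := Nat.exists_eq_add_of_le had.le
  simp only [zero_add, Nat.add_sub_cancel, Nat.add_sub_cancel_left] at h ⊢
  calc (t ^ (k + 1 + m)) ^ (k + 1) = (t ^ (k + 1 + m)) ^ k * (t ^ m * t ^ (k + 1)) := by ring
    _ ≤ (2 * s ^ (k + 1)) ^ k * (t ^ m * t ^ (k + 1)) := by gcongr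
    _ = 2 ^ k * t ^ m * (t * s ^ k) ^ (k + 1) := by ring

lemma pow_pow_le_of_gt {a d : ℕ} {t s : ℝ} (ht : 0 ≤ t) (hd : 0 < d) (hda : d < a)
    (h : t ^ d ≤ 2 * s ^ a) : (t ^ d) ^ a ≤ 2 * t ^ (a - d) * (s * t ^ (d - 1)) ^ a := by
  obtain ⟨k, rfl⟩ := Nat.exists_eq_add_of_lt hd
  obtain ⟨m, rfl⟩ := Nat.exists_eq_add_of_le hda.le
  simp only [zero_add, Nat.add_sub_cancel, Nat.add_sub_cancel_left] at h ⊢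
  calc (t ^ (k + 1)) ^ (k + 1 + m) = t ^ (k + 1) * (t ^ m * (t ^ k) ^ (k + 1 + m)) := by ring
    _ ≤ 2 * s ^ (k + 1 + m) * (t ^ m * (t ^ k) ^ (k + 1 + m)) := by gcongr
    _ = 2 * t ^ m * (s * t ^ k) ^ (k + 1 + m) := by ring

section Gradient

variable {a b c d : ℕ} {x y z : ℂ}

lemma nrm2C_nonneg (u v : ℂ) : 0 ≤ nrm2C u v := Real.sqrt_nonneg _

lemma gradNormC_nonneg (a b c d : ℕ) (x y z : ℂ) : 0 ≤ gradNormC a b c d x y z :=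
  Real.sqrt_nonneg _

lemma norm_le_nrm2C_left (u v : ℂ) : ‖u‖ ≤ nrm2C u v :=
  Real.le_sqrt_of_sq_le (by nlinarith [sq_nonneg ‖v‖])

lemma norm_le_nrm2C_right (u v : ℂ) : ‖v‖ ≤ nrm2C u v :=
  Real.le_sqrt_of_sq_le (by nlinarith [sq_nonneg ‖u‖])

lemma norm_fxC_le_gradNormC (a : ℕ) (y : ℂ) : ‖fxC b c d x z‖ ≤ gradNormC a b c d x y z :=
  Real.le_sqrt_of_sq_le (by nlinarith [sq_nonneg ‖fyC a y‖, sq_nonneg ‖fzC b c x z‖])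

lemma norm_fyC_le_gradNormC (b c d : ℕ) (x z : ℂ) : ‖fyC a y‖ ≤ gradNormC a b c d x y z :=
  Real.le_sqrt_of_sq_le (by nlinarith [sq_nonneg ‖fxC b c d x z‖, sq_nonneg ‖fzC b c x z‖])

lemma norm_fyC (a : ℕ) (y : ℂ) : ‖fyC a y‖ = a * ‖y‖ ^ (a - 1) := by
  simp [fyC]

lemma norm_fzC (b c : ℕ) (x z : ℂ) : ‖fzC b c x z‖ = b * (‖z‖ ^ (b - 1) * ‖x‖ ^ c) := by
  simp [fzC, mul_assoc]

lemma mul_fxC (b c d : ℕ) (x z : ℂ) :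
    x * fxC b c d x z = -(c * (z ^ b * x ^ c)) - d * x ^ d := by
  rcases c with _ | c <;> rcases d with _ | d <;> simp [fxC, pow_succ] <;> ring

lemma mul_fyC (a : ℕ) (y : ℂ) : y * fyC a y = a * y ^ a := by
  rcases a with _ | a
  · simp [fyC]
  · simp only [fyC, Nat.add_sub_cancel, pow_succ]
    ring

lemma mul_fxC_add_mul_fyC (hV : y ^ a = z ^ b * x ^ c + x ^ d) :
    x * fxC b c d x z + y * fyC a y = (a - c) * (z ^ b * x ^ c) + (a - d) * x ^ d := by
  rw [mul_fxC, mul_fyC, hV]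
  ring

lemma mul_pow_le_nrm2C_mul_gradNormC (ha : 0 < a) (b c d : ℕ) (x y z : ℂ) :
    a * ‖y‖ ^ a ≤ nrm2C x y * gradNormC a b c d x y z := by
  calc (a : ℝ) * ‖y‖ ^ a = ‖y‖ * ‖fyC a y‖ := by
        rw [norm_fyC, ← mul_assoc, mul_comm ‖y‖, mul_assoc, ← pow_succ', Nat.sub_add_cancel ha]
    _ ≤ _ := mul_le_mul (norm_le_nrm2C_right x y) (norm_fyC_le_gradNormC b c d x z)
        (norm_nonneg _) (nrm2C_nonneg x y)

end Gradient

section ExponentOne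

variable {b c d : ℕ}

lemma one_le_gradNormC_one (x y z : ℂ) : 1 ≤ gradNormC 1 b c d x y z := by
  simpa [fyC] using norm_fyC_le_gradNormC (a := 1) (y := y) b c d x z

theorem aRegC_one (hc : 0 < c) : aRegC 1 b c d := by
  intro x y z _ hlim _
  have hfz : Tendsto (fun n => ‖fzC b c (x n) (z n)‖) atTop (𝓝 0) := by
    have hcont : Continuous fun p : ℂ × ℂ × ℂ => ‖fzC b c p.1 p.2.2‖ := by
      unfold fzC; fun_prop
    simpa [Function.comp_def, fzC, hc.ne'] using (hcont.tendsto _).comp hlim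
  refine squeeze_zero (fun n => div_nonneg (norm_nonneg _) (gradNormC_nonneg ..))
    (fun n => div_le_of_le_mul₀ (gradNormC_nonneg ..) (norm_nonneg _) ?_) hfz
  exact le_mul_of_one_le_right (norm_nonneg _) (one_le_gradNormC_one ..)

theorem bpiC_one (hb : 0 < b) (hc : 0 < c) (hd : 0 < d) : bpiC 1 b c d := by
  intro x y z hX hlim _
  set g : ℂ → ℂ → ℂ := fun x z => (1 - c) * z ^ b * x ^ (c - 1) + (1 - d) * x ^ (d - 1)
  have hnum n : x n * fxC b c d (x n) (z n) + y n * fyC 1 (y n) = x n * g (x n) (z n) := by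
    rw [mul_fxC_add_mul_fyC (hX n).1, ← pow_sub_mul_pow (x n) hc, ← pow_sub_mul_pow (x n) hd]
    simp only [g]
    push_cast
    ring
  have hg : Tendsto (fun n => ‖g (x n) (z n)‖) atTop (𝓝 0) := by
    have hcont : Continuous fun p : ℂ × ℂ × ℂ => ‖g p.1 p.2.2‖ := by fun_prop
    -- for d = 1 the coefficient 1 - d vanishes, for d ≥ 2 the power x ^ (d - 1) does
    obtain ⟨d, rfl⟩ := Nat.exists_eq_add_of_lt hd
    rcases d with _ | d <;> simpa [Function.comp_def, g, hb.ne'] using (hcont.tendsto _).comp hlim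
  refine squeeze_zero (fun n => div_nonneg (norm_nonneg _)
      (mul_nonneg (nrm2C_nonneg ..) (gradNormC_nonneg ..)))
    (fun n => div_le_of_le_mul₀ (mul_nonneg (nrm2C_nonneg ..) (gradNormC_nonneg ..))
      (norm_nonneg _) ?_) hg
  rw [hnum, norm_mul, mul_comm]
  gcongr
  calc ‖x n‖ = ‖x n‖ * 1 := (mul_one _).symm
    _ ≤ _ := mul_le_mul (norm_le_nrm2C_left _ _) (one_le_gradNormC_one ..) zero_le_one
        (nrm2C_nonneg ..)

end ExponentOne

section LeExponentPointwise

variable {a b c d : ℕ} {x y z : ℂ}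

lemma le_norm_fxC (hd : 0 < d) (hdc : d ≤ c) (hu : 2 * c * ‖z ^ b * x ^ (c - d)‖ ≤ d) :
    d / 2 * ‖x‖ ^ (d - 1) ≤ ‖fxC b c d x z‖ := by
  set u := z ^ b * x ^ (c - d)
  have hfx : fxC b c d x z = -(x ^ (d - 1) * (c * u + d)) := by
    rw [fxC, show c - 1 = (c - d) + (d - 1) by omega, pow_add]; ring
  have hcu : (d : ℝ) / 2 ≤ ‖(c : ℂ) * u + d‖ := by
    have := norm_sub_le ((c : ℂ) * u + d) (c * u)
    rw [add_sub_cancel_left, norm_mul, Complex.norm_natCast, Complex.norm_natCast] at this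
    linarith
  rw [hfx, norm_neg, norm_mul, norm_pow, mul_comm]
  gcongr

lemma le_two_mul_norm_pow (hd : 0 < d) (hdc : d ≤ c) (hV : y ^ a = z ^ b * x ^ c + x ^ d)
    (hu : 2 * c * ‖z ^ b * x ^ (c - d)‖ ≤ d) : ‖x‖ ^ d ≤ 2 * ‖y‖ ^ a := by
  set u := z ^ b * x ^ (c - d)
  have hy : y ^ a = x ^ d * (u + 1) := by
    rw [hV, ← pow_sub_mul_pow x hdc]
    ring
  have hu' : ‖u‖ ≤ 1 / 2 := by
    have : (d : ℝ) ≤ c := by exact_mod_cast hdc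
    have : (0 : ℝ) < c := by exact_mod_cast hd.trans_le hdc
    nlinarith [norm_nonneg u]
  have hu1 : 1 / 2 ≤ ‖u + 1‖ := by
    have := norm_sub_le (u + 1) u
    rw [add_sub_cancel_left, norm_one] at this
    linarith
  rw [← norm_pow y, hy, norm_mul, norm_pow]
  nlinarith [pow_nonneg (norm_nonneg x) d]

lemma norm_fzC_div_gradNormC_le (hd : 0 < d) (hdc : d ≤ c)
    (hu : 2 * c * ‖z ^ b * x ^ (c - d)‖ ≤ d) :
    ‖fzC b c x z‖ / gradNormC a b c d x y z ≤ 2 * b / d * (‖z‖ ^ (b - 1) * ‖x‖ ^ (c - d + 1)) := by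
  refine div_le_of_le_mul₀ (gradNormC_nonneg ..) (by positivity) ?_
  have hd' : (0 : ℝ) < d := by exact_mod_cast hd
  calc ‖fzC b c x z‖
        = 2 * b / d * (‖z‖ ^ (b - 1) * ‖x‖ ^ (c - d + 1)) * (d / 2 * ‖x‖ ^ (d - 1)) := by
        rw [norm_fzC, ← pow_sub_mul_pow ‖x‖ (show d - 1 ≤ c by omega),
          show c - (d - 1) = c - d + 1 by omega]
        field_simp
    _ ≤ _ := by
        gcongr
        exact (le_norm_fxC hd hdc hu).trans (norm_fxC_le_gradNormC a y)

lemma bpi_ratio_le (ha : 0 < a) (hd : 0 < d) (hdc : d ≤ c) (hV : y ^ a = z ^ b * x ^ c + x ^ d)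
    (hu : 2 * c * ‖z ^ b * x ^ (c - d)‖ ≤ d) :
    ‖x * fxC b c d x z + y * fyC a y‖ / (nrm2C x y * gradNormC a b c d x y z) ≤
      2 * ‖(a : ℂ) - c‖ / a * ‖z ^ b * x ^ (c - d)‖ +
        ‖(a : ℂ) - d‖ * (‖x‖ ^ d / (nrm2C x y * gradNormC a b c d x y z)) := by
  set D := nrm2C x y * gradNormC a b c d x y z
  set u := z ^ b * x ^ (c - d)
  have hD : 0 ≤ D := mul_nonneg (nrm2C_nonneg ..) (gradNormC_nonneg ..)
  have hxD : ‖x‖ ^ d / D ≤ 2 / a := by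
    refine div_le_of_le_mul₀ hD (by positivity) ?_
    have ha' : (0 : ℝ) < a := by exact_mod_cast ha
    have := le_two_mul_norm_pow hd hdc hV hu
    have := mul_pow_le_nrm2C_mul_gradNormC ha b c d x y z
    rw [div_mul_eq_mul_div, le_div_iff₀ ha']
    nlinarith
  rw [mul_fxC_add_mul_fyC hV, show z ^ b * x ^ c = u * x ^ d by rw [← pow_sub_mul_pow x hdc]; ring]
  calc ‖((a : ℂ) - c) * (u * x ^ d) + (a - d) * x ^ d‖ / D
      ≤ (‖(a : ℂ) - c‖ * ‖u‖ * ‖x‖ ^ d + ‖(a : ℂ) - d‖ * ‖x‖ ^ d) / D := by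
        gcongr
        refine (norm_add_le _ _).trans_eq ?_
        simp only [norm_mul, norm_pow, mul_assoc]
    _ = ‖(a : ℂ) - c‖ * ‖u‖ * (‖x‖ ^ d / D) + ‖(a : ℂ) - d‖ * (‖x‖ ^ d / D) := by ring
    _ ≤ ‖(a : ℂ) - c‖ * ‖u‖ * (2 / a) + ‖(a : ℂ) - d‖ * (‖x‖ ^ d / D) := by gcongr
    _ = _ := by ring

lemma pow_norm_pow_div_le_of_lt (ha : 0 < a) (had : a < d) (hreg : ‖x‖ ^ d ≤ 2 * ‖y‖ ^ a) :
    (‖x‖ ^ d / (nrm2C x y * gradNormC a b c d x y z)) ^ a ≤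
      2 ^ (a - 1) / a ^ a * ‖x‖ ^ (d - a) := by
  rw [div_mul_eq_mul_div]
  refine div_pow_le_of_pow_le ha.ne' (by exact_mod_cast ha) (by positivity)
    (P := ‖x‖ * ‖y‖ ^ (a - 1)) (by positivity) ?_
    ((pow_pow_le_of_lt (norm_nonneg x) ha had hreg).trans_eq (by ring))
  rw [mul_left_comm, ← norm_fyC]
  exact mul_le_mul (norm_le_nrm2C_left x y) (norm_fyC_le_gradNormC b c d x z) (norm_nonneg _)
    (nrm2C_nonneg x y)

lemma pow_norm_pow_div_le_of_gt (hd : 0 < d) (hdc : d ≤ c) (hda : d < a)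
    (hu : 2 * c * ‖z ^ b * x ^ (c - d)‖ ≤ d) (hreg : ‖x‖ ^ d ≤ 2 * ‖y‖ ^ a) :
    (‖x‖ ^ d / (nrm2C x y * gradNormC a b c d x y z)) ^ a ≤
      2 / (d / 2) ^ a * ‖x‖ ^ (a - d) := by
  rw [div_mul_eq_mul_div]
  refine div_pow_le_of_pow_le (by omega) (by positivity)
    (P := ‖y‖ * ‖x‖ ^ (d - 1)) (by positivity) (by positivity) ?_
    ((pow_pow_le_of_gt (norm_nonneg x) hd hda hreg).trans_eq (by ring))
  rw [mul_left_comm]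
  exact mul_le_mul (norm_le_nrm2C_right x y)
    ((le_norm_fxC hd hdc hu).trans (norm_fxC_le_gradNormC a y)) (by positivity) (nrm2C_nonneg x y)

end LeExponentPointwise

section LeExponentSequences

variable {a b c d : ℕ} {x y z : ℕ → ℂ}

lemma eventually_two_mul_norm_le (hb : 0 < b) (hd : 0 < d)
    (hlim : Tendsto (fun n => (x n, y n, z n)) atTop (𝓝 ((0 : ℂ), (0 : ℂ), (0 : ℂ)))) :
    ∀ᶠ n in atTop, 2 * c * ‖z n ^ b * x n ^ (c - d)‖ ≤ d := by
  have hcont : Continuous fun p : ℂ × ℂ × ℂ => 2 * c * ‖p.2.2 ^ b * p.1 ^ (c - d)‖ := by fun_prop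
  have := (hcont.tendsto _).comp hlim
  simp only [Function.comp_def, zero_pow hb.ne', zero_mul, norm_zero, mul_zero] at this
  exact this.eventually (eventually_le_nhds (by exact_mod_cast hd))

theorem aRegC_of_le (hb : 0 < b) (hd : 0 < d) (hdc : d ≤ c) : aRegC a b c d := by
  intro x y z _ hlim _
  have hcont : Continuous fun p : ℂ × ℂ × ℂ =>
      2 * b / d * (‖p.2.2‖ ^ (b - 1) * ‖p.1‖ ^ (c - d + 1)) := by fun_prop
  refine squeeze_zero' (.of_forall fun n => div_nonneg (norm_nonneg _) (gradNormC_nonneg ..))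
    ((eventually_two_mul_norm_le hb hd hlim).mono fun n hn => norm_fzC_div_gradNormC_le hd hdc hn)
    ?_
  simpa [Function.comp_def] using (hcont.tendsto _).comp hlim

lemma tendsto_norm_pow_div_of_ne (ha : 0 < a) (hb : 0 < b) (hd : 0 < d) (hdc : d ≤ c)
    (had : a ≠ d) (hX : ∀ n, inXC a b c d (x n) (y n) (z n))
    (hlim : Tendsto (fun n => (x n, y n, z n)) atTop (𝓝 ((0 : ℂ), (0 : ℂ), (0 : ℂ)))) :
    Tendsto (fun n => ‖x n‖ ^ d / (nrm2C (x n) (y n) * gradNormC a b c d (x n) (y n) (z n)))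
      atTop (𝓝 0) := by
  have hx : Tendsto (fun n => ‖x n‖) atTop (𝓝 0) := by simpa using hlim.fst_nhds.norm
  have hu := eventually_two_mul_norm_le (c := c) hb hd hlim
  have hnonneg n : 0 ≤ ‖x n‖ ^ d / (nrm2C (x n) (y n) * gradNormC a b c d (x n) (y n) (z n)) :=
    div_nonneg (by positivity) (mul_nonneg (nrm2C_nonneg ..) (gradNormC_nonneg ..))
  rcases had.lt_or_gt with h | h
  · exact hx.zero_of_pow_le ha.ne' (by omega) hnonneg <| hu.mono fun n hn =>
      pow_norm_pow_div_le_of_lt ha h (le_two_mul_norm_pow hd hdc (hX n).1 hn)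
  · exact hx.zero_of_pow_le ha.ne' (by omega) hnonneg <| hu.mono fun n hn =>
      pow_norm_pow_div_le_of_gt hd hdc h hn (le_two_mul_norm_pow hd hdc (hX n).1 hn)

theorem bpiC_of_le (ha : 0 < a) (hb : 0 < b) (hd : 0 < d) (hdc : d ≤ c) : bpiC a b c d := by
  intro x y z hX hlim _
  have hu := eventually_two_mul_norm_le (c := c) hb hd hlim
  have hcont : Continuous fun p : ℂ × ℂ × ℂ =>
      2 * ‖(a : ℂ) - c‖ / a * ‖p.2.2 ^ b * p.1 ^ (c - d)‖ := by fun_prop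
  have hfirst := (hcont.tendsto _).comp hlim
  simp only [Function.comp_def, zero_pow hb.ne', zero_mul, norm_zero, mul_zero] at hfirst
  have hsecond : Tendsto (fun n => ‖(a : ℂ) - d‖ *
      (‖x n‖ ^ d / (nrm2C (x n) (y n) * gradNormC a b c d (x n) (y n) (z n)))) atTop (𝓝 0) := by
    rcases eq_or_ne a d with rfl | had
    · simp
    · simpa using (tendsto_norm_pow_div_of_ne ha hb hd hdc had hX hlim).const_mul _
  refine squeeze_zero' (.of_forall fun n => div_nonneg (norm_nonneg _)
      (mul_nonneg (nrm2C_nonneg ..) (gradNormC_nonneg ..)))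
    (hu.mono fun n hn => bpi_ratio_le ha hd hdc (hX n).1 hn) ?_
  simpa using hfirst.add hsecond

end LeExponentSequences

section Necessity

variable {a b c d : ℕ}

lemma ratio_sq_add_ratio_sq_eq_one (ha : 2 ≤ a) {x z : ℂ} (hx : x ≠ 0)
    (hfx : fxC b c d x z ≠ 0) :
    (‖fzC b c x z‖ / gradNormC a b c d x 0 z) ^ 2 +
      (‖x * fxC b c d x z + 0 * fyC a 0‖ / (nrm2C x 0 * gradNormC a b c d x 0 z)) ^ 2 = 1 := by
  have hfy : fyC a 0 = 0 := by simp [fyC, show a - 1 ≠ 0 by omega]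
  have hG : gradNormC a b c d x 0 z ^ 2 = ‖fxC b c d x z‖ ^ 2 + ‖fzC b c x z‖ ^ 2 := by
    rw [gradNormC, nrm3C, hfy, norm_zero, Real.sq_sqrt (by positivity)]
    ring
  have hG0 : gradNormC a b c d x 0 z ^ 2 ≠ 0 := by
    rw [hG]
    have := norm_pos_iff.2 hfx
    positivity
  have hn : nrm2C x 0 = ‖x‖ := by simp [nrm2C]
  rw [zero_mul, add_zero, hn, norm_mul, mul_div_mul_left _ _ (norm_ne_zero_iff.2 hx), div_pow,
    div_pow, ← add_div, add_comm, ← hG, div_self hG0]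

lemma not_bRegC_of_tendsto (ha : 2 ≤ a) {x z : ℕ → ℂ} (hX : ∀ n, inXC a b c d (x n) 0 (z n))
    (hx : Tendsto x atTop (𝓝 0)) (hz : Tendsto z atTop (𝓝 0))
    (hfx : ∀ n, fxC b c d (x n) (z n) ≠ 0) : ¬ bRegC a b c d := by
  rintro ⟨hA, hB⟩
  have hlim : Tendsto (fun n => (x n, (0 : ℂ), z n)) atTop (𝓝 ((0 : ℂ), (0 : ℂ), (0 : ℂ))) :=
    hx.prodMk_nhds (tendsto_const_nhds.prodMk_nhds hz)
  have hgrad n : gradNeC a b c d (x n) 0 (z n) := fun h => hfx n h.1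
  have hsum := ((hA x _ z hX hlim hgrad).pow 2).add ((hB x _ z hX hlim hgrad).pow 2)
  have hone : Tendsto (fun _ : ℕ => (1 : ℝ)) atTop (𝓝 0) := by
    refine (hsum.congr fun n => ?_).trans_eq (by simp)
    exact ratio_sq_add_ratio_sq_eq_one ha (fun h => (hX n).2 ⟨h, rfl⟩) (hfx n)
  exact one_ne_zero (tendsto_nhds_unique tendsto_const_nhds hone)

theorem not_bRegC_of_lt (ha : 2 ≤ a) (hb : 0 < b) (hcd : c < d) : ¬ bRegC a b c d := by
  obtain ⟨e, rfl⟩ := Nat.exists_eq_add_of_lt hcd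
  obtain ⟨ζ, hζ⟩ := IsAlgClosed.exists_pow_nat_eq (-1 : ℂ) hb
  set u : ℕ → ℂ := fun n => 1 / ((n : ℂ) + 1)
  have hu0 n : u n ≠ 0 := one_div_ne_zero (Nat.cast_add_one_ne_zero n)
  have hu : Tendsto u atTop (𝓝 0) := tendsto_one_div_add_atTop_nhds_zero_nat
  have hcurve n : (ζ * u n ^ (e + 1)) ^ b * (u n ^ b) ^ c = -(u n ^ b) ^ (c + e + 1) := by
    rw [mul_pow, hζ]
    ring
  refine not_bRegC_of_tendsto ha (x := fun n => u n ^ b) (z := fun n => ζ * u n ^ (e + 1))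
    (fun n => ⟨?_, fun h => pow_ne_zero b (hu0 n) h.1⟩) ?_ ?_ (fun n hfx => ?_)
  · rw [hcurve, zero_pow (by omega)]
    ring
  · simpa [hb.ne'] using hu.pow b
  · simpa using (hu.pow (e + 1)).const_mul ζ
  · have := mul_fxC b c (c + e + 1) (u n ^ b) (ζ * u n ^ (e + 1))
    rw [hfx, mul_zero, hcurve] at this
    have : ((e : ℂ) + 1) * (u n ^ b) ^ (c + e + 1) = 0 := by
      push_cast at this
      linear_combination this
    simp [hu0 n, Nat.cast_add_one_ne_zero e] at this

end Necessity

/-- Whitney (b)-regularity classification for y^a = z^b x^c + x^d in ℂ³ (Diagram 3). -/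
theorem whitney_b_complex (a b c d : ℕ) (ha : 0 < a) (hb : 0 < b) (hc : 0 < c) (hd : 0 < d) :
    bRegC a b c d ↔ a = 1 ∨ d ≤ c := by
  refine ⟨fun h => ?_, ?_⟩
  · by_contra! hne
    exact not_bRegC_of_lt (by omega) hb hne.2 h
  · rintro (rfl | hdc)
    · exact ⟨aRegC_one hc, bpiC_one hb hc hd⟩
    · exact ⟨aRegC_of_le hb hd hdc, bpiC_of_le ha hb hd hdc⟩

end
end

section
/- Let a, b, c, d be positive integers with a > 1, d > c, b even, d − c even, a·(d − c) > b·|d − a|, a ≤ c, d ≥ b + c, and such that a ≤ b or d·(a − b) < a·c. Then the pair (X, Oz) associated to the real surface V = {(x,y,z) ∈ ℝ³ : y^a = z^b·x^c + x^d} is Whitney (b)-regular at the origin but is not Kuo–Verdier (w)-regular at the origin. (This gives infinitely many real algebraic examples where (b) holds but (w) fails, generalizing the three previously known examples (a,b,c,d) = (3,2,3,5), (4,2,5,7), (4,4,1,3).) -/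
/-!
Since `b` and `d - c` are even, every point of `X` satisfies
`|y| ^ a = |x| ^ c * (|z| ^ b + |x| ^ (d - c))` with `x`, `y` nonzero, and
`‖∇f‖ ≥ |∂f/∂y| = a |y| ^ (a - 1)`. The hypotheses force `b < a`, hence `d (a - b) < a c`.

(a): raised to the power `a b`, `|∂f/∂z| / |∂f/∂y|` is at most a constant times
`|x| ^ (a c - d (a - b))`, because
`(|z| ^ b + |x| ^ (d - c)) ^ ((a - 1) b) ≥ |z| ^ (a b (b - 1)) * |x| ^ ((d - c) (a - b))`.

(bᵖⁱ): on `V`, `x ∂f/∂x + y ∂f/∂y = (a - c) z ^ b x ^ c + (a - d) x ^ d` has size at most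
`(d - a) |y| ^ a` as `a ≤ c`, so the quotient is `O(|y| / |x|)`, and
`(|y| / |x|) ^ a = |x| ^ (c - a) * (|z| ^ b + |x| ^ (d - c)) → 0`.

(w) fails along `(r ^ (a b), 2 ^ (1 / a) r ^ (b d), r ^ (a (d - c)))`, on which
`z ^ b x ^ c = x ^ d`: there `|∂f/∂z| = b r ^ e` with `e = a (d - c) (b - 1) + a b c`, while
`‖(x, y)‖ ‖∇f‖ = O(r ^ (e + 1))`; for the `∂f/∂y` term this gain of one power of `r` is exactly
`b (d - a) < a (d - c)`.
-/

open Filter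

noncomputable section

/-- x-partial derivative of f(x,y,z) = y^a - z^b*x^c - x^d. -/
def fxR (b c d : ℕ) (x z : ℝ) : ℝ :=
  -(c : ℝ) * z ^ b * x ^ (c - 1) - (d : ℝ) * x ^ (d - 1)

/-- y-partial derivative of f. -/
def fyR (a : ℕ) (y : ℝ) : ℝ := (a : ℝ) * y ^ (a - 1)

/-- z-partial derivative of f. -/
def fzR (b c : ℕ) (x z : ℝ) : ℝ := -(b : ℝ) * z ^ (b - 1) * x ^ c

/-- Euclidean norm on ℝ³. -/
def nrm3R (u v w : ℝ) : ℝ := Real.sqrt (u ^ 2 + v ^ 2 + w ^ 2)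

/-- Euclidean norm on ℝ². -/
def nrm2R (u v : ℝ) : ℝ := Real.sqrt (u ^ 2 + v ^ 2)

/-- Norm of the gradient ∇f(x,y,z). -/
def gradNormR (a b c d : ℕ) (x y z : ℝ) : ℝ :=
  nrm3R (fxR b c d x z) (fyR a y) (fzR b c x z)

/-- The gradient ∇f(x,y,z) is nonzero. -/
def gradNeR (a b c d : ℕ) (x y z : ℝ) : Prop :=
  ¬ (fxR b c d x z = 0 ∧ fyR a y = 0 ∧ fzR b c x z = 0)

/-- Membership in X = V \ Oz, where V = {y^a = z^b x^c + x^d} and Oz is the z-axis. -/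
def inXR (a b c d : ℕ) (x y z : ℝ) : Prop :=
  y ^ a = z ^ b * x ^ c + x ^ d ∧ ¬ (x = 0 ∧ y = 0)

/-- Whitney (a)-regularity of the pair (X, Oz) at the origin. -/
def aRegR (a b c d : ℕ) : Prop :=
  ∀ x y z : ℕ → ℝ,
    (∀ n, inXR a b c d (x n) (y n) (z n)) →
    Tendsto (fun n => (x n, y n, z n)) atTop (nhds ((0 : ℝ), (0 : ℝ), (0 : ℝ))) →
    (∀ n, gradNeR a b c d (x n) (y n) (z n)) →
    Tendsto (fun n => |fzR b c (x n) (z n)| / gradNormR a b c d (x n) (y n) (z n))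
      atTop (nhds 0)

/-- The (bᵖⁱ) condition for the retraction π(x,y,z) = (0,0,z). -/
def bpiR (a b c d : ℕ) : Prop :=
  ∀ x y z : ℕ → ℝ,
    (∀ n, inXR a b c d (x n) (y n) (z n)) →
    Tendsto (fun n => (x n, y n, z n)) atTop (nhds ((0 : ℝ), (0 : ℝ), (0 : ℝ))) →
    (∀ n, gradNeR a b c d (x n) (y n) (z n)) →
    Tendsto (fun n => |x n * fxR b c d (x n) (z n) + y n * fyR a (y n)| /
        (nrm2R (x n) (y n) * gradNormR a b c d (x n) (y n) (z n)))
      atTop (nhds 0)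

/-- Whitney (b)-regularity of the pair (X, Oz) at the origin. -/
def bRegR (a b c d : ℕ) : Prop := aRegR a b c d ∧ bpiR a b c d

/-- Kuo–Verdier (w)-regularity of the pair (X, Oz) at the origin. -/
def wRegR (a b c d : ℕ) : Prop :=
  ∃ C : ℝ, 0 < C ∧ ∃ ε : ℝ, 0 < ε ∧ ∀ x y z : ℝ,
    inXR a b c d x y z → nrm3R x y z < ε → gradNeR a b c d x y z →
    |fzR b c x z| ≤ C * nrm2R x y * gradNormR a b c d x y z

open Topology

theorem tendsto_zero_of_pow_le {α : Type*} {l : Filter α} {f g : α → ℝ} {k : ℕ}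
    (hk : k ≠ 0) (hf : ∀ i, 0 ≤ f i) (hfg : ∀ i, f i ^ k ≤ g i) (hg : Tendsto g l (𝓝 0)) :
    Tendsto f l (𝓝 0) :=
  tendsto_order.2 ⟨fun _ h => Eventually.of_forall fun i => h.trans_le (hf i),
    fun _ hε => (hg.eventually (gt_mem_nhds (pow_pos hε k))).mono fun i hi =>
      (pow_lt_pow_iff_left₀ (hf i) hε.le hk).1 ((hfg i).trans_lt hi)⟩

theorem mul_pow_le_add_pow {u v : ℝ} (hu : 0 ≤ u) (hv : 0 ≤ v) (m n : ℕ) :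
    u ^ m * v ^ n ≤ (u + v) ^ (m + n) := by
  rw [pow_add]
  gcongr
  exacts [le_add_of_nonneg_right hv, le_add_of_nonneg_left hu]

theorem abs_le_nrm3R_snd (u v w : ℝ) : |v| ≤ nrm3R u v w :=
  Real.abs_le_sqrt (by nlinarith [sq_nonneg u, sq_nonneg w])

theorem nrm3R_le_abs_add_abs_add_abs (u v w : ℝ) : nrm3R u v w ≤ |u| + |v| + |w| :=
  Real.sqrt_le_iff.2 ⟨by positivity, by
    nlinarith [sq_abs u, sq_abs v, sq_abs w, abs_nonneg u, abs_nonneg v, abs_nonneg w,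
      mul_nonneg (abs_nonneg u) (abs_nonneg v), mul_nonneg (abs_nonneg u) (abs_nonneg w),
      mul_nonneg (abs_nonneg v) (abs_nonneg w)]⟩

theorem abs_le_nrm2R_fst (u v : ℝ) : |u| ≤ nrm2R u v :=
  Real.abs_le_sqrt (by nlinarith [sq_nonneg v])

theorem nrm2R_le_abs_add_abs (u v : ℝ) : nrm2R u v ≤ |u| + |v| :=
  Real.sqrt_le_iff.2 ⟨by positivity, by
    nlinarith [sq_abs u, sq_abs v, mul_nonneg (abs_nonneg u) (abs_nonneg v)]⟩

theorem pow_mul_pow_le_of_pow_eq {s t Y : ℝ} {a b c k : ℕ} (hs : 0 ≤ s) (ht : 0 ≤ t)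
    (hY : Y ^ a = t ^ c * (s ^ b + t ^ k)) (hb : 0 < b) (hba : b ≤ a) (hE : k * (a - b) ≤ b * c) :
    (s ^ (b - 1) * t ^ c) ^ (a * b) ≤ t ^ (b * c - k * (a - b)) * (Y ^ (a - 1)) ^ (a * b) := by
  obtain ⟨β, rfl⟩ : ∃ β, b = β + 1 := ⟨b - 1, by omega⟩
  obtain ⟨g, rfl⟩ : ∃ g, a = β + 1 + g := ⟨a - (β + 1), by omega⟩
  obtain ⟨e, he⟩ : ∃ e, (β + 1) * c = k * g + e := ⟨(β + 1) * c - k * g, by simp at hE; omega⟩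
  simp only [Nat.add_sub_cancel, Nat.add_sub_cancel_left, he] at hY ⊢
  rw [show β + 1 + g - 1 = β + g by omega]
  have hW := mul_pow_le_add_pow (pow_nonneg hs (β + 1)) (pow_nonneg ht k) ((β + 1 + g) * β) g
  generalize s ^ (β + 1) + t ^ k = W at hY hW
  calc (s ^ β * t ^ c) ^ ((β + 1 + g) * (β + 1))
      = t ^ e * t ^ (c * (β + g) * (β + 1)) *
          ((s ^ (β + 1)) ^ ((β + 1 + g) * β) * (t ^ k) ^ g) := by
        rw [show (s ^ β * t ^ c) ^ ((β + 1 + g) * (β + 1)) = s ^ (β * ((β + 1 + g) * (β + 1))) *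
          t ^ (c * (β + g) * (β + 1) + (β + 1) * c) by ring, he]
        ring
    _ ≤ t ^ e * t ^ (c * (β + g) * (β + 1)) * W ^ ((β + 1 + g) * β + g) := by
        gcongr
    _ = t ^ e * (Y ^ (β + g)) ^ ((β + 1 + g) * (β + 1)) := by
        rw [show (Y ^ (β + g)) ^ ((β + 1 + g) * (β + 1)) =
          (Y ^ (β + 1 + g)) ^ ((β + g) * (β + 1)) by ring, hY]
        ring

section PointsOfX

variable {a b c d : ℕ} {x y z : ℝ}

theorem abs_fyR (a : ℕ) (y : ℝ) : |fyR a y| = a * |y| ^ (a - 1) := by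
  rw [fyR, abs_mul, abs_pow, Nat.abs_cast]

theorem abs_fzR (b c : ℕ) (x z : ℝ) : |fzR b c x z| = b * |z| ^ (b - 1) * |x| ^ c := by
  rw [fzR, abs_mul, abs_mul, abs_neg, abs_pow, abs_pow, Nat.abs_cast]

theorem abs_fyR_le_gradNormR : |fyR a y| ≤ gradNormR a b c d x y z :=
  abs_le_nrm3R_snd _ _ _

theorem inXR.fst_ne_zero (ha : a ≠ 0) (hc : c ≠ 0) (hd : d ≠ 0) (h : inXR a b c d x y z) :
    x ≠ 0 := by
  rintro rfl
  exact h.2 ⟨rfl, pow_eq_zero_iff ha |>.1 (by simpa [hc, hd] using h.1)⟩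

theorem inXR.abs_pow_eq (hbe : Even b) (hcd : c ≤ d) (hdce : Even (d - c))
    (h : inXR a b c d x y z) : |y| ^ a = |x| ^ c * (|z| ^ b + |x| ^ (d - c)) := by
  have hsum : 0 ≤ z ^ b + x ^ (d - c) := add_nonneg (hbe.pow_nonneg z) (hdce.pow_nonneg x)
  rw [hbe.pow_abs, hdce.pow_abs, ← abs_pow, h.1, ← abs_of_nonneg hsum, ← abs_pow, ← abs_mul,
    mul_add, ← pow_add, Nat.add_sub_cancel' hcd, mul_comm]

theorem abs_pos_of_abs_pow_eq {k : ℕ} (ha : a ≠ 0) (hx : x ≠ 0)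
    (hY : |y| ^ a = |x| ^ c * (|z| ^ b + |x| ^ k)) : 0 < |y| := by
  refine (abs_nonneg y).lt_of_ne fun h => ?_
  rw [← h, zero_pow ha] at hY
  have : 0 < |x| ^ c * (|z| ^ b + |x| ^ k) := by positivity
  exact this.ne hY

end PointsOfX

section Regularity

variable {a b c d : ℕ}

theorem fzR_div_gradNormR_pow_le {x y z : ℝ} (hb : 0 < b) (hbe : Even b) (hcd : c ≤ d)
    (hdce : Even (d - c)) (hba : b ≤ a) (hE : (d - c) * (a - b) ≤ b * c) (hx : x ≠ 0)
    (h : inXR a b c d x y z) :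
    (|fzR b c x z| / gradNormR a b c d x y z) ^ (a * b) ≤
      ((b : ℝ) / a) ^ (a * b) * |x| ^ (b * c - (d - c) * (a - b)) := by
  have ha : 0 < a := hb.trans_le hba
  have hY := h.abs_pow_eq hbe hcd hdce
  have hy := abs_pos_of_abs_pow_eq ha.ne' hx hY
  have hfy : 0 < |fyR a y| := by rw [abs_fyR]; positivity
  calc (|fzR b c x z| / gradNormR a b c d x y z) ^ (a * b)
      ≤ (|fzR b c x z| / |fyR a y|) ^ (a * b) := by
        gcongr
        exacts [div_nonneg (abs_nonneg _) (Real.sqrt_nonneg _), abs_fyR_le_gradNormR]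
    _ = ((b : ℝ) / a) ^ (a * b) *
          ((|z| ^ (b - 1) * |x| ^ c) ^ (a * b) / (|y| ^ (a - 1)) ^ (a * b)) := by
        rw [abs_fzR, abs_fyR]; ring
    _ ≤ ((b : ℝ) / a) ^ (a * b) * |x| ^ (b * c - (d - c) * (a - b)) := by
        gcongr
        rw [div_le_iff₀ (by positivity)]
        exact pow_mul_pow_le_of_pow_eq (abs_nonneg z) (abs_nonneg x) hY hb hba hE

theorem aRegR_of (hb : 0 < b) (hbe : Even b) (hcd : c ≤ d) (hdce : Even (d - c)) (hba : b ≤ a)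
    (hE : d * (a - b) < a * c) : aRegR a b c d := by
  obtain ⟨k, rfl⟩ : ∃ k, d = c + k := ⟨d - c, by omega⟩
  obtain ⟨g, rfl⟩ : ∃ g, a = b + g := ⟨a - b, by omega⟩
  have hE' : k * g < b * c := by simp only [Nat.add_sub_cancel_left] at hE; nlinarith
  have hc : c ≠ 0 := by rintro rfl; simp at hE'
  intro x y z hX hlim _
  have hx : Tendsto x atTop (𝓝 0) := (continuous_fst.tendsto _).comp hlim
  refine tendsto_zero_of_pow_le (k := (b + g) * b) (by positivity)
    (fun n => div_nonneg (abs_nonneg _) (Real.sqrt_nonneg _))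
    (fun n => fzR_div_gradNormR_pow_le hb hbe hcd hdce (by omega) (by simpa using hE'.le)
      ((hX n).fst_ne_zero (by omega) hc (by omega)) (hX n)) ?_
  simpa [zero_pow (Nat.sub_ne_zero_of_lt hE')] using
    (hx.abs.pow (b * c - k * g)).const_mul (((b : ℝ) / (b + g)) ^ ((b + g) * b))

theorem mul_fxR_add_mul_fyR_eq {x y z : ℝ} (ha : a ≠ 0) (hc : c ≠ 0) (hd : d ≠ 0)
    (h : inXR a b c d x y z) :
    x * fxR b c d x z + y * fyR a y = (a - c) * (z ^ b * x ^ c) + (a - d) * x ^ d := by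
  have hx : x * (-(c : ℝ) * z ^ b * x ^ (c - 1) - d * x ^ (d - 1)) =
      -c * z ^ b * x ^ c - d * x ^ d := by
    rw [← mul_pow_sub_one hc x, ← mul_pow_sub_one hd x]; ring
  rw [fxR, fyR, hx, mul_left_comm, mul_pow_sub_one ha, h.1]
  ring

theorem abs_mul_fxR_add_mul_fyR_le {x y z : ℝ} (hbe : Even b) (ha : a ≠ 0) (hac : a ≤ c)
    (hcd : c ≤ d) (hdce : Even (d - c)) (h : inXR a b c d x y z) :
    |x * fxR b c d x z + y * fyR a y| ≤ (d - a) * |y| ^ a := by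
  have hc : c ≠ 0 := by omega
  have hca : (a : ℝ) ≤ c := by exact_mod_cast hac
  have hcd' : (c : ℝ) ≤ d := by exact_mod_cast hcd
  rw [mul_fxR_add_mul_fyR_eq ha hc (by omega) h, h.abs_pow_eq hbe hcd hdce]
  calc |(a - c) * (z ^ b * x ^ c) + (a - d) * x ^ d|
      ≤ |(a - c) * (z ^ b * x ^ c)| + |(a - d) * x ^ d| := abs_add_le _ _
    _ = (c - a) * (|z| ^ b * |x| ^ c) + (d - a) * |x| ^ d := by
        rw [abs_mul, abs_mul, abs_mul, abs_of_nonpos (show (a : ℝ) - c ≤ 0 by linarith),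
          abs_of_nonpos (show (a : ℝ) - d ≤ 0 by linarith), abs_pow, abs_pow, abs_pow]
        ring
    _ ≤ (d - a) * (|x| ^ c * (|z| ^ b + |x| ^ (d - c))) := by
        rw [mul_add, ← pow_add, Nat.add_sub_cancel' hcd]
        nlinarith [mul_nonneg (pow_nonneg (abs_nonneg z) b) (pow_nonneg (abs_nonneg x) c)]

theorem abs_mul_fxR_add_mul_fyR_div_le {x y z : ℝ} (hbe : Even b) (ha : a ≠ 0) (hac : a ≤ c)
    (hcd : c ≤ d) (hdce : Even (d - c)) (hx : x ≠ 0) (h : inXR a b c d x y z) :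
    |x * fxR b c d x z + y * fyR a y| / (nrm2R x y * gradNormR a b c d x y z) ≤
      (d - a) / a * (|y| / |x|) := by
  have hy := abs_pos_of_abs_pow_eq ha hx (h.abs_pow_eq hbe hcd hdce)
  have hx' := abs_pos.2 hx
  have hda : (a : ℝ) ≤ d := by exact_mod_cast hac.trans hcd
  calc |x * fxR b c d x z + y * fyR a y| / (nrm2R x y * gradNormR a b c d x y z)
      ≤ (d - a) * |y| ^ a / (|x| * (a * |y| ^ (a - 1))) := by
        refine div_le_div₀ (mul_nonneg (by linarith) (by positivity))
          (abs_mul_fxR_add_mul_fyR_le hbe ha hac hcd hdce h) (by positivity) ?_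
        rw [← abs_fyR]
        exact mul_le_mul (abs_le_nrm2R_fst x y) abs_fyR_le_gradNormR (abs_nonneg _)
          ((abs_nonneg x).trans (abs_le_nrm2R_fst x y))
    _ = (d - a) / a * (|y| / |x|) := by
        rw [← mul_pow_sub_one ha]
        field_simp

theorem bpiR_of (ha : a ≠ 0) (hb : 0 < b) (hbe : Even b) (hac : a ≤ c) (hcd : c < d)
    (hdce : Even (d - c)) : bpiR a b c d := by
  intro x y z hX hlim _
  have hx : Tendsto x atTop (𝓝 0) := (continuous_fst.tendsto _).comp hlim
  have hz : Tendsto z atTop (𝓝 0) := ((continuous_snd.comp continuous_snd).tendsto _).comp hlim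
  have hx0 n : x n ≠ 0 := (hX n).fst_ne_zero ha (by omega) (by omega)
  have hyx : Tendsto (fun n => |y n| / |x n|) atTop (𝓝 0) := by
    refine tendsto_zero_of_pow_le ha (fun n => by positivity) (fun n => le_of_eq ?_) (g :=
      fun n => |x n| ^ (c - a) * (|z n| ^ b + |x n| ^ (d - c))) ?_
    · rw [div_pow, (hX n).abs_pow_eq hbe hcd.le hdce, ← pow_sub_mul_pow |x n| hac]
      rw [mul_right_comm, mul_div_cancel_right₀ _ (pow_ne_zero a (abs_ne_zero.2 (hx0 n)))]
    · simpa [hb.ne', Nat.sub_ne_zero_of_lt hcd] using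
        (hx.abs.pow (c - a)).mul ((hz.abs.pow b).add (hx.abs.pow (d - c)))
  refine squeeze_zero (fun n => div_nonneg (abs_nonneg _)
      (mul_nonneg (Real.sqrt_nonneg _) (Real.sqrt_nonneg _)))
    (fun n => abs_mul_fxR_add_mul_fyR_div_le hbe ha hac hcd.le hdce (hx0 n) (hX n)) ?_
  simpa using hyx.const_mul (((d : ℝ) - a) / a)

end Regularity

section Curve

variable {a b c d : ℕ} {κ r : ℝ}

theorem inXR_curve (hκ : κ ^ a = 2) (hr : r ≠ 0) (hcd : c ≤ d) :
    inXR a b c d (r ^ (a * b)) (κ * r ^ (b * d)) (r ^ (a * (d - c))) := by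
  refine ⟨?_, fun h => pow_ne_zero _ hr h.1⟩
  obtain ⟨k, rfl⟩ : ∃ k, d = c + k := ⟨d - c, by omega⟩
  rw [Nat.add_sub_cancel_left, mul_pow, hκ]
  ring

theorem fxR_curve (hc : c ≠ 0) (hcd : c ≤ d) :
    fxR b c d (r ^ (a * b)) (r ^ (a * (d - c))) = -(c + d) * r ^ (a * b * (d - 1)) := by
  obtain ⟨γ, rfl⟩ : ∃ γ, c = γ + 1 := ⟨c - 1, by omega⟩
  obtain ⟨k, rfl⟩ : ∃ k, d = γ + 1 + k := ⟨d - (γ + 1), by omega⟩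
  rw [fxR, show γ + 1 + k - (γ + 1) = k by omega, show γ + 1 + k - 1 = γ + k by omega,
    Nat.add_sub_cancel]
  push_cast
  ring

theorem fyR_curve : fyR a (κ * r ^ (b * d)) = a * κ ^ (a - 1) * r ^ (b * d * (a - 1)) := by
  rw [fyR, mul_pow, ← pow_mul]
  ring

theorem fzR_curve :
    fzR b c (r ^ (a * b)) (r ^ (a * (d - c))) = -b * r ^ (a * (d - c) * (b - 1) + a * b * c) := by
  rw [fzR, ← pow_mul, ← pow_mul, mul_assoc, ← pow_add]

theorem nrm2R_mul_gradNormR_curve_le (ha : 0 < a) (hb : 0 < b) (hc : c ≠ 0) (hcd : c < d)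
    (had : a ≤ d) (hw : b * (d - a) < a * (d - c)) (hκ : 0 ≤ κ) (hr0 : 0 ≤ r) (hr1 : r ≤ 1) :
    nrm2R (r ^ (a * b)) (κ * r ^ (b * d)) *
        gradNormR a b c d (r ^ (a * b)) (κ * r ^ (b * d)) (r ^ (a * (d - c))) ≤
      (1 + κ) * (c + d + a * κ ^ (a - 1) + b) * r ^ (a * (d - c) * (b - 1) + a * b * c + 1) := by
  set e := a * (d - c) * (b - 1) + a * b * c
  have hexp : e + 1 ≤ a * b + a * b * (d - 1) ∧ e + 1 ≤ a * b + b * d * (a - 1) ∧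
      1 ≤ a * b := by
    simp only [e]
    zify [hb, hcd.le, had, (show 1 ≤ a by omega), (show 1 ≤ d by omega)] at hw ⊢
    have := mul_pos (Int.natCast_pos.2 ha) (sub_pos.2 (Int.ofNat_lt.2 hcd))
    refine ⟨by nlinarith, by nlinarith, by nlinarith⟩
  have hxy : nrm2R (r ^ (a * b)) (κ * r ^ (b * d)) ≤ (1 + κ) * r ^ (a * b) := by
    refine (nrm2R_le_abs_add_abs _ _).trans ?_
    rw [abs_of_nonneg (by positivity), abs_of_nonneg (by positivity)]
    have : r ^ (b * d) ≤ r ^ (a * b) := pow_le_pow_of_le_one hr0 hr1 (by nlinarith)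
    nlinarith
  have hgrad : gradNormR a b c d (r ^ (a * b)) (κ * r ^ (b * d)) (r ^ (a * (d - c))) ≤
      (c + d) * r ^ (a * b * (d - 1)) + a * κ ^ (a - 1) * r ^ (b * d * (a - 1)) + b * r ^ e := by
    refine (nrm3R_le_abs_add_abs_add_abs _ _ _).trans (le_of_eq ?_)
    simp only [fxR_curve hc hcd.le, fyR_curve, fzR_curve, abs_mul, abs_neg, abs_pow,
      Nat.abs_cast, abs_of_nonneg hr0, abs_of_nonneg hκ,
      abs_of_nonneg (by positivity : (0 : ℝ) ≤ c + d), e]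
  have hmono {n : ℕ} (hn : e + 1 ≤ a * b + n) : r ^ (a * b) * r ^ n ≤ r ^ (e + 1) := by
    rw [← pow_add]; exact pow_le_pow_of_le_one hr0 hr1 hn
  calc nrm2R (r ^ (a * b)) (κ * r ^ (b * d)) *
        gradNormR a b c d (r ^ (a * b)) (κ * r ^ (b * d)) (r ^ (a * (d - c)))
      ≤ (1 + κ) * r ^ (a * b) *
          ((c + d) * r ^ (a * b * (d - 1)) + a * κ ^ (a - 1) * r ^ (b * d * (a - 1)) +
            b * r ^ e) :=
        mul_le_mul hxy hgrad (Real.sqrt_nonneg _) (by positivity)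
    _ = (1 + κ) * ((c + d) * (r ^ (a * b) * r ^ (a * b * (d - 1))) +
          a * κ ^ (a - 1) * (r ^ (a * b) * r ^ (b * d * (a - 1))) +
          b * (r ^ (a * b) * r ^ e)) := by
        ring
    _ ≤ (1 + κ) * ((c + d) * r ^ (e + 1) + a * κ ^ (a - 1) * r ^ (e + 1) + b * r ^ (e + 1)) := by
        gcongr
        exacts [hmono hexp.1, hmono hexp.2.1, hmono (by omega)]
    _ = (1 + κ) * (c + d + a * κ ^ (a - 1) + b) * r ^ (e + 1) := by ring

end Curve

theorem not_wRegR {a b c d : ℕ} (ha : 0 < a) (hb : 0 < b) (hc : c ≠ 0) (hcd : c < d)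
    (had : a ≤ d) (hw : b * (d - a) < a * (d - c)) : ¬ wRegR a b c d := by
  rintro ⟨C, hC, ε, hε, hreg⟩
  obtain ⟨κ, hκ0, hκ⟩ : ∃ κ : ℝ, 0 < κ ∧ κ ^ a = 2 :=
    ⟨2 ^ ((a : ℝ)⁻¹), by positivity, Real.rpow_inv_natCast_pow (by norm_num) ha.ne'⟩
  set K : ℝ := (1 + κ) * (c + d + a * κ ^ (a - 1) + b)
  set e := a * (d - c) * (b - 1) + a * b * c
  have hnear : ∀ᶠ r in 𝓝 (0 : ℝ),
      nrm3R (r ^ (a * b)) (κ * r ^ (b * d)) (r ^ (a * (d - c))) < ε ∧ r < 1 ∧ C * K * r < b := by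
    refine (ContinuousAt.eventually_lt (by unfold nrm3R; fun_prop) continuousAt_const ?_).and
      ((eventually_lt_nhds one_pos).and
        (ContinuousAt.eventually_lt (by fun_prop) continuousAt_const (by simpa using hb)))
    simpa [nrm3R, ha.ne', hb.ne', Nat.sub_ne_zero_of_lt hcd, show d ≠ 0 by omega] using hε
  obtain ⟨r, ⟨hrε, hr1, hrC⟩, hr0 : 0 < r⟩ :=
    ((hnear.filter_mono nhdsWithin_le_nhds).and
      (self_mem_nhdsWithin : Set.Ioi (0 : ℝ) ∈ 𝓝[>] 0)).exists
  have hgrad : gradNeR a b c d (r ^ (a * b)) (κ * r ^ (b * d)) (r ^ (a * (d - c))) := fun h => by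
    simpa [fyR_curve, ha.ne', hκ0.ne', hr0.ne'] using h.2.1
  have hfz := hreg _ _ _ (inXR_curve hκ hr0.ne' hcd.le) hrε hgrad
  rw [fzR_curve, abs_mul, abs_neg, Nat.abs_cast, abs_of_nonneg (pow_nonneg hr0.le _)] at hfz
  have hbound := nrm2R_mul_gradNormR_curve_le ha hb hc hcd had hw hκ0.le hr0.le hr1.le
  have : (b : ℝ) * r ^ e < b * r ^ e := calc
    (b : ℝ) * r ^ e ≤ C * (nrm2R (r ^ (a * b)) (κ * r ^ (b * d)) *
        gradNormR a b c d (r ^ (a * b)) (κ * r ^ (b * d)) (r ^ (a * (d - c)))) := by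
      rw [← mul_assoc]; exact hfz
    _ ≤ C * (K * r ^ (e + 1)) := mul_le_mul_of_nonneg_left hbound hC.le
    _ = C * K * r * r ^ e := by ring
    _ < b * r ^ e := by gcongr
  exact this.false

theorem b_regular_w_fault_real_general (a b c d : ℕ) (hb : 0 < b) (hdc : c < d) (hbe : Even b)
    (hdce : Even (d - c))
    (hw : (b : ℤ) * |(d : ℤ) - (a : ℤ)| < (a : ℤ) * ((d : ℤ) - (c : ℤ)))
    (hac : a ≤ c) (hcase : a ≤ b ∨ d * (a - b) < a * c) :
    bRegR a b c d ∧ ¬ wRegR a b c d := by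
  have had : a ≤ d := hac.trans hdc.le
  have hw' : b * (d - a) < a * (d - c) := by
    rw [abs_of_nonneg (sub_nonneg.2 (Int.ofNat_le.2 had))] at hw
    zify [had, hdc.le]
    exact hw
  have hba : b < a := lt_of_not_ge fun hab =>
    (Nat.mul_le_mul hab (Nat.sub_le_sub_left hac d)).not_gt hw'
  have ha : 0 < a := hb.trans hba
  exact ⟨⟨aRegR_of hb hbe hdc.le hdce hba.le (hcase.resolve_left hba.not_ge),
      bpiR_of ha.ne' hb hbe hac hdc hdce⟩,
    not_wRegR ha hb (ha.trans_le hac).ne' hdc had hw'⟩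

/-- Infinitely many real algebraic examples where Whitney (b) holds but Kuo–Verdier (w) fails. -/
theorem b_regular_w_fault_real (a b c d : ℕ) (ha : 0 < a) (hb : 0 < b) (hc : 0 < c)
    (hd : 0 < d) (ha1 : 1 < a) (hdc : c < d) (hbe : Even b) (hdce : Even (d - c))
    (hw : (b : ℤ) * |(d : ℤ) - (a : ℤ)| < (a : ℤ) * ((d : ℤ) - (c : ℤ)))
    (hac : a ≤ c) (hbcd : b + c ≤ d) (hcase : a ≤ b ∨ d * (a - b) < a * c) :
    bRegR a b c d ∧ ¬ wRegR a b c d :=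
  b_regular_w_fault_real_general a b c d hb hdc hbe hdce hw hac hcase
end
end
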